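/- Let (M,g) be a pseudo-Riemannian manifold and let (L, Λ, 0) be a solution of the system ∇_X L = X^♭ ⊙ Λ, ∇Λ = μ g, ∇μ = 0 with μ = 0 (i.e., ∇Λ = 0), and let λ be a function with dλ = Λ. Then the 1-form Λ̃ := L(Λ^♯, ·) − λΛ satisfies ∇Λ̃ = μ̃ g, where μ̃ = |Λ|² = g(Λ^♯, Λ^♯) is constant. -/

import Mathlib

open Real Matrix Finset

/-! Coordinate framework for pseudo-Riemannian geometry on `ℝ^ι`:
metrics are matrix-valued functions, and the Levi-Civita connection is given by
the Christoffel symbols. -/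

variable {ι : Type} [Fintype ι] [DecidableEq ι]

/-- Partial derivative in the `i`-th coordinate direction. -/
noncomputable def pd (i : ι) (f : (ι → ℝ) → ℝ) (x : ι → ℝ) : ℝ :=
  fderiv ℝ f x (Pi.single i 1)

/-- Christoffel symbols `Γ^k_{ij}` of a metric `g` in coordinates. -/
noncomputable def christoffel (g : (ι → ℝ) → Matrix ι ι ℝ) (k i j : ι) (x : ι → ℝ) : ℝ :=
  (1 / 2) * ∑ l, (g x)⁻¹ k l *
    (pd i (fun y => g y j l) x + pd j (fun y => g y i l) x - pd l (fun y => g y i j) x)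

/-- Covariant derivative `(∇_{∂k} L)_{ij}` of a `(0,2)`-tensor field `L`. -/
noncomputable def covDer2 (g L : (ι → ℝ) → Matrix ι ι ℝ) (k i j : ι) (x : ι → ℝ) : ℝ :=
  pd k (fun y => L y i j) x - (∑ l, christoffel g l k i x * L x l j)
    - ∑ l, christoffel g l k j x * L x i l

/-- Covariant derivative `(∇_{∂k} Λ)_i` of a 1-form `Λ`. -/
noncomputable def covDer1 (g : (ι → ℝ) → Matrix ι ι ℝ) (Λ : (ι → ℝ) → ι → ℝ)
    (k i : ι) (x : ι → ℝ) : ℝ :=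
  pd k (fun y => Λ y i) x - ∑ l, christoffel g l k i x * Λ x l

/-- Covariant derivative `(∇_{∂k} X)^l` of a vector field `X`. -/
noncomputable def covDerVF (g : (ι → ℝ) → Matrix ι ι ℝ) (X : (ι → ℝ) → ι → ℝ)
    (k l : ι) (x : ι → ℝ) : ℝ :=
  pd k (fun y => X y l) x + ∑ m, christoffel g l k m x * X x m

/-- The `l`-th component of `R(∂i,∂j)∂k`, with the curvature convention
`R(X,Y)Z = ∇_X ∇_Y Z − ∇_Y ∇_X Z − ∇_{[X,Y]} Z`. -/
noncomputable def riem (g : (ι → ℝ) → Matrix ι ι ℝ) (l i j k : ι) (x : ι → ℝ) : ℝ :=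
  pd i (christoffel g l j k) x - pd j (christoffel g l i k) x
    + (∑ m, christoffel g l i m x * christoffel g m j k x)
    - ∑ m, christoffel g l j m x * christoffel g m i k x

/-- Ricci tensor `Ric(∂i,∂j) = trace (Z ↦ R(Z,∂i)∂j)`. -/
noncomputable def ricci (g : (ι → ℝ) → Matrix ι ι ℝ) (i j : ι) (x : ι → ℝ) : ℝ :=
  ∑ l, riem g l l i j x

/-- All matrix entries of `g` are smooth functions. -/
def SmoothM (g : (ι → ℝ) → Matrix ι ι ℝ) : Prop :=
  ∀ i j, ContDiff ℝ (⊤ : ℕ∞) fun x => g x i j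

/-- `g` is symmetric. -/
def SymM (g : (ι → ℝ) → Matrix ι ι ℝ) : Prop := ∀ x, (g x)ᵀ = g x

/-- `g` is everywhere nondegenerate. -/
def NondegM (g : (ι → ℝ) → Matrix ι ι ℝ) : Prop := ∀ x, (g x).det ≠ 0

/-- The projective equation `∇_X L = X^♭ ⊙ Λ`; in coordinates
`(∇_{∂k} L)_{ij} = g_{ki} Λ_j + g_{kj} Λ_i`. -/
def ProjEqn (g L : (ι → ℝ) → Matrix ι ι ℝ) (Λ : (ι → ℝ) → ι → ℝ) : Prop :=
  ∀ k i j x, covDer2 g L k i j x = g x k i * Λ x j + g x k j * Λ x i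

/-- `ξ` is a cone vector field: `∇̂_X ξ = X` for all `X`. -/
def IsConeVF (g : (ι → ℝ) → Matrix ι ι ℝ) (ξ : (ι → ℝ) → ι → ℝ) : Prop :=
  ∀ k l x, covDerVF g ξ k l x = if k = l then 1 else 0

section Toolkit
variable {i : ι} {x : ι → ℝ}

lemma pd_congr {f h : (ι → ℝ) → ℝ} (hfh : ∀ y, f y = h y) (i : ι) (x : ι → ℝ) :
    pd i f x = pd i h x := by
  unfold pd; rw [funext hfh]

lemma pd_const (i : ι) (c : ℝ) (x : ι → ℝ) : pd i (fun _ => c) x = 0 := by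
  simp [pd]

lemma pd_add {f h : (ι → ℝ) → ℝ} (hf : DifferentiableAt ℝ f x) (hh : DifferentiableAt ℝ h x) :
    pd i (fun y => f y + h y) x = pd i f x + pd i h x := by
  simp [pd, fderiv_fun_add hf hh]

lemma pd_sub {f h : (ι → ℝ) → ℝ} (hf : DifferentiableAt ℝ f x) (hh : DifferentiableAt ℝ h x) :
    pd i (fun y => f y - h y) x = pd i f x - pd i h x := by
  simp [pd, fderiv_fun_sub hf hh]

lemma pd_mul {f h : (ι → ℝ) → ℝ} (hf : DifferentiableAt ℝ f x) (hh : DifferentiableAt ℝ h x) :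
    pd i (fun y => f y * h y) x = pd i f x * h x + f x * pd i h x := by
  simp [pd, fderiv_fun_mul hf hh]; ring

lemma pd_sum {α : Type*} {s : Finset α} {f : α → (ι → ℝ) → ℝ}
    (hf : ∀ a ∈ s, DifferentiableAt ℝ (f a) x) :
    pd i (fun y => ∑ a ∈ s, f a y) x = ∑ a ∈ s, pd i (f a) x := by
  simp [pd, fderiv_fun_sum hf]

end Toolkit


lemma smooth_det {g : (ι → ℝ) → Matrix ι ι ℝ} (hg : SmoothM g) :
    ContDiff ℝ (⊤ : ℕ∞) fun x => (g x).det := by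
  have : (fun x => (g x).det)
      = fun x => ∑ σ : Equiv.Perm ι, ((Equiv.Perm.sign σ : ℤ) : ℝ) * ∏ i, g x (σ i) i := by
    funext x; rw [Matrix.det_apply']
  rw [this]
  exact ContDiff.sum fun σ _ =>
    contDiff_const.mul (contDiff_prod fun i _ => hg (σ i) i)

lemma smooth_entries_updateRow {g : (ι → ℝ) → Matrix ι ι ℝ} (hg : SmoothM g) (r : ι)
    (v : ι → ℝ) (a b : ι) : ContDiff ℝ (⊤ : ℕ∞) fun x => (g x).updateRow r v a b := by
  by_cases h : a = r
  · subst h; simpa [Matrix.updateRow_apply] using contDiff_const (c := v b)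
  · simp only [Matrix.updateRow_apply, if_neg h]; exact hg a b

lemma smooth_adjugate {g : (ι → ℝ) → Matrix ι ι ℝ} (hg : SmoothM g) (a b : ι) :
    ContDiff ℝ (⊤ : ℕ∞) fun x => (g x).adjugate a b := by
  have : (fun x => (g x).adjugate a b)
      = fun x => ((g x).updateRow b (Pi.single a 1)).det := by
    funext x; rw [Matrix.adjugate_apply]
  rw [this]
  exact smooth_det fun i j => smooth_entries_updateRow hg _ _ i j

lemma smooth_ginv {g : (ι → ℝ) → Matrix ι ι ℝ} (hg : SmoothM g) (hgn : NondegM g) (a b : ι) :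
    ContDiff ℝ (⊤ : ℕ∞) fun x => (g x)⁻¹ a b := by
  have : (fun x => (g x)⁻¹ a b) = fun x => ((g x).det)⁻¹ * (g x).adjugate a b := by
    funext x
    rw [Matrix.inv_def, Matrix.smul_apply, Ring.inverse_eq_inv', smul_eq_mul]
  rw [this]
  exact ((smooth_det hg).inv hgn).mul (smooth_adjugate hg a b)

section Geom
variable {g : (ι → ℝ) → Matrix ι ι ℝ}

lemma gsym (hgs : SymM g) (x : ι → ℝ) (a b : ι) : g x a b = g x b a := by
  conv_lhs => rw [← hgs x]
  rfl

lemma hinv₁ (hgn : NondegM g) (x : ι → ℝ) (a b : ι) :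
    ∑ l, (g x)⁻¹ a l * g x l b = if a = b then 1 else 0 := by
  have h := Matrix.nonsing_inv_mul (g x) ((hgn x).isUnit)
  have := congrFun (congrFun h a) b
  rwa [Matrix.mul_apply, Matrix.one_apply] at this

lemma hinv₂ (hgn : NondegM g) (x : ι → ℝ) (a b : ι) :
    ∑ l, g x a l * (g x)⁻¹ l b = if a = b then 1 else 0 := by
  have h := Matrix.mul_nonsing_inv (g x) ((hgn x).isUnit)
  have := congrFun (congrFun h a) b
  rwa [Matrix.mul_apply, Matrix.one_apply] at this

/-- Contraction of Christoffel symbols with the metric. -/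
lemma gamma_g (hgs : SymM g) (hgn : NondegM g) (k i j : ι) (x : ι → ℝ) :
    ∑ m, christoffel g m k i x * g x m j
      = (1/2) * (pd k (fun y => g y i j) x + pd i (fun y => g y k j) x
          - pd j (fun y => g y k i) x) := by
  set D : ι → ℝ := fun l =>
    pd k (fun y => g y i l) x + pd i (fun y => g y k l) x - pd l (fun y => g y k i) x with hD
  calc ∑ m, christoffel g m k i x * g x m j
      = ∑ m, ∑ l, (g x j m * (g x)⁻¹ m l) * ((1/2) * D l) := by
        refine Finset.sum_congr rfl fun m _ => ?_
        rw [christoffel, Finset.mul_sum, Finset.sum_mul]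
        refine Finset.sum_congr rfl fun l _ => ?_
        rw [gsym hgs x j m]; ring
    _ = ∑ l, (∑ m, g x j m * (g x)⁻¹ m l) * ((1/2) * D l) := by
        rw [Finset.sum_comm]
        exact Finset.sum_congr rfl fun l _ => (Finset.sum_mul _ _ _).symm
    _ = ∑ l, (if j = l then 1 else 0) * ((1/2) * D l) := by
        exact Finset.sum_congr rfl fun l _ => by rw [hinv₂ hgn]
    _ = (1/2) * D j := by simp
    _ = _ := by rw [hD]

/-- Metric compatibility: `∇ g = 0`. -/
lemma compat (hg : SmoothM g) (hgs : SymM g) (hgn : NondegM g) (k i j : ι) (x : ι → ℝ) :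
    pd k (fun y => g y i j) x
      = ∑ m, christoffel g m k i x * g x m j + ∑ m, christoffel g m k j x * g x m i := by
  rw [gamma_g hgs hgn, gamma_g hgs hgn]
  have e1 : pd k (fun y => g y j i) x = pd k (fun y => g y i j) x :=
    pd_congr (fun y => gsym hgs y j i) k x
  have e2 : pd i (fun y => g y k j) x = pd i (fun y => g y j k) x :=
    pd_congr (fun y => gsym hgs y k j) i x
  have e3 : pd j (fun y => g y k i) x = pd j (fun y => g y i k) x :=
    pd_congr (fun y => gsym hgs y k i) j x
  rw [e1, e2, e3]; ring
end Geom

section Geom2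
variable {g : (ι → ℝ) → Matrix ι ι ℝ}

lemma sum_mul_ite (v : ι → ℝ) (c : ι) : ∑ m, v m * (if m = c then 1 else 0) = v c := by
  simp

lemma sum_ite_mul' (v : ι → ℝ) (c : ι) : ∑ m, (if c = m then 1 else 0) * v m = v c := by
  simp

/-- Coordinate formula for `∇ g⁻¹ = 0`. -/
lemma pd_ginv (hg : SmoothM g) (hgs : SymM g) (hgn : NondegM g) (k a c : ι) (x : ι → ℝ) :
    pd k (fun y => (g y)⁻¹ a c) x
      = -(∑ l, (g x)⁻¹ a l * christoffel g c k l x)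
        - ∑ b, christoffel g a k b x * (g x)⁻¹ b c := by
  have dg : ∀ i j, DifferentiableAt ℝ (fun y => g y i j) x :=
    fun i j => ((hg i j).differentiable (by simp)).differentiableAt
  have dinv : ∀ i j, DifferentiableAt ℝ (fun y => (g y)⁻¹ i j) x :=
    fun i j => ((smooth_ginv hg hgn i j).differentiable (by simp)).differentiableAt
  set P : ι → ℝ := fun l => pd k (fun y => (g y)⁻¹ a l) x with hP
  -- differentiating g⁻¹ * g = 1
  have h0 : ∀ b, ∑ l, P l * g x l b = -∑ l, (g x)⁻¹ a l * pd k (fun y => g y l b) x := by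
    intro b
    have hconst : pd k (fun y => ∑ l, (g y)⁻¹ a l * g y l b) x = 0 := by
      rw [pd_congr (fun y => hinv₁ hgn y a b) k x, pd_const]
    rw [pd_sum (fun l _ => ((dinv a l).fun_mul (dg l b)))] at hconst
    have hterm : ∀ l ∈ Finset.univ, pd k (fun y => (g y)⁻¹ a l * g y l b) x
        = P l * g x l b + (g x)⁻¹ a l * pd k (fun y => g y l b) x :=
      fun l _ => pd_mul (dinv a l) (dg l b)
    rw [Finset.sum_congr rfl hterm, Finset.sum_add_distrib] at hconst
    linarith
  -- reconstructing P c by contracting with g⁻¹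
  have h1 : P c = ∑ b, (∑ l, P l * g x l b) * (g x)⁻¹ b c := by
    calc P c = ∑ l, P l * (if l = c then 1 else 0) := (sum_mul_ite P c).symm
      _ = ∑ l, P l * (∑ b, g x l b * (g x)⁻¹ b c) := by
          exact Finset.sum_congr rfl fun l _ => by rw [hinv₂ hgn]
      _ = ∑ l, ∑ b, P l * (g x l b * (g x)⁻¹ b c) := by
          exact Finset.sum_congr rfl fun l _ => Finset.mul_sum _ _ _
      _ = ∑ b, ∑ l, P l * (g x l b * (g x)⁻¹ b c) := Finset.sum_comm
      _ = ∑ b, (∑ l, P l * g x l b) * (g x)⁻¹ b c := by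
          refine Finset.sum_congr rfl fun b _ => ?_
          rw [Finset.sum_mul]
          exact Finset.sum_congr rfl fun l _ => by ring
  show P c = _
  rw [h1]
  have h2 : ∀ b, (∑ l, P l * g x l b) * (g x)⁻¹ b c
      = -∑ l, (g x)⁻¹ a l * pd k (fun y => g y l b) x * (g x)⁻¹ b c := by
    intro b; rw [h0 b, neg_mul, Finset.sum_mul]
  calc ∑ b, (∑ l, P l * g x l b) * (g x)⁻¹ b c
      = -∑ b, ∑ l, (g x)⁻¹ a l * pd k (fun y => g y l b) x * (g x)⁻¹ b c := by
        rw [← Finset.sum_neg_distrib]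
        exact Finset.sum_congr rfl fun b _ => h2 b
    _ = -∑ b, ∑ l, ((g x)⁻¹ a l *
          ((∑ m, christoffel g m k l x * g x m b) + ∑ m, christoffel g m k b x * g x m l)
          * (g x)⁻¹ b c) := by
        congr 1
        refine Finset.sum_congr rfl fun b _ => Finset.sum_congr rfl fun l _ => ?_
        rw [compat hg hgs hgn k l b x]
    _ = -((∑ b, ∑ l, ∑ m, (g x)⁻¹ a l * christoffel g m k l x * (g x m b * (g x)⁻¹ b c))
          + ∑ b, ∑ l, ∑ m, christoffel g m k b x * (g x)⁻¹ b c * (g x l m * (g x)⁻¹ a l)) := by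
        congr 1
        rw [← Finset.sum_add_distrib]
        refine Finset.sum_congr rfl fun b _ => ?_
        rw [← Finset.sum_add_distrib]
        refine Finset.sum_congr rfl fun l _ => ?_
        rw [mul_add, add_mul]
        congr 1
        · rw [Finset.mul_sum, Finset.sum_mul]
          exact Finset.sum_congr rfl fun m _ => by ring
        · rw [Finset.mul_sum, Finset.sum_mul]
          exact Finset.sum_congr rfl fun m _ => by rw [gsym hgs x m l]; ring
    _ = -(∑ l, (g x)⁻¹ a l * christoffel g c k l x)
        - ∑ b, christoffel g a k b x * (g x)⁻¹ b c := by
        have e1 : (∑ b, ∑ l, ∑ m, (g x)⁻¹ a l * christoffel g m k l x * (g x m b * (g x)⁻¹ b c))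
            = ∑ l, (g x)⁻¹ a l * christoffel g c k l x := by
          rw [Finset.sum_comm]
          refine Finset.sum_congr rfl fun l _ => ?_
          rw [Finset.sum_comm]
          calc ∑ m, ∑ b, (g x)⁻¹ a l * christoffel g m k l x * (g x m b * (g x)⁻¹ b c)
              = ∑ m, ((g x)⁻¹ a l * christoffel g m k l x) * (if m = c then 1 else 0) := by
                refine Finset.sum_congr rfl fun m _ => ?_
                rw [← Finset.mul_sum, hinv₂ hgn]
            _ = (g x)⁻¹ a l * christoffel g c k l x := sum_mul_ite _ c
        have e2 : (∑ b, ∑ l, ∑ m, christoffel g m k b x * (g x)⁻¹ b c * (g x l m * (g x)⁻¹ a l))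
            = ∑ b, christoffel g a k b x * (g x)⁻¹ b c := by
          refine Finset.sum_congr rfl fun b _ => ?_
          rw [Finset.sum_comm]
          calc ∑ m, ∑ l, christoffel g m k b x * (g x)⁻¹ b c * (g x l m * (g x)⁻¹ a l)
              = ∑ m, (christoffel g m k b x * (g x)⁻¹ b c) * (if a = m then 1 else 0) := by
                refine Finset.sum_congr rfl fun m _ => ?_
                rw [← Finset.mul_sum]
                congr 1
                calc ∑ l, g x l m * (g x)⁻¹ a l
                    = ∑ l, (g x)⁻¹ a l * g x l m := by
                      exact Finset.sum_congr rfl fun l _ => by ring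
                  _ = if a = m then 1 else 0 := hinv₁ hgn x a m
            _ = christoffel g a k b x * (g x)⁻¹ b c := by simp
        rw [e1, e2, neg_add]
        ring
end Geom2

section Geom3
variable {g : (ι → ℝ) → Matrix ι ι ℝ} {Λ : (ι → ℝ) → ι → ℝ}

/-- `∇Λ = 0` implies the metric dual of `Λ` is parallel. -/
lemma pd_xi (hg : SmoothM g) (hgs : SymM g) (hgn : NondegM g)
    (hΛ : ∀ i, ContDiff ℝ (⊤ : ℕ∞) fun x => Λ x i)
    (hpar : ∀ k i x, covDer1 g Λ k i x = 0) (k a : ι) (x : ι → ℝ) :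
    pd k (fun y => ∑ b, (g y)⁻¹ a b * Λ y b) x
      = -∑ m, christoffel g a k m x * (∑ b, (g x)⁻¹ m b * Λ x b) := by
  have dΛ : ∀ b, DifferentiableAt ℝ (fun y => Λ y b) x :=
    fun b => ((hΛ b).differentiable (by simp)).differentiableAt
  have dinv : ∀ i j, DifferentiableAt ℝ (fun y => (g y)⁻¹ i j) x :=
    fun i j => ((smooth_ginv hg hgn i j).differentiable (by simp)).differentiableAt
  have pdΛ : ∀ b, pd k (fun y => Λ y b) x = ∑ l, christoffel g l k b x * Λ x l := by
    intro b
    have := hpar k b x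
    rw [covDer1] at this
    linarith
  calc pd k (fun y => ∑ b, (g y)⁻¹ a b * Λ y b) x
      = ∑ b, (pd k (fun y => (g y)⁻¹ a b) x * Λ x b
          + (g x)⁻¹ a b * pd k (fun y => Λ y b) x) := by
        rw [pd_sum (fun b _ => (dinv a b).fun_mul (dΛ b))]
        exact Finset.sum_congr rfl fun b _ => pd_mul (dinv a b) (dΛ b)
    _ = ∑ b, (((g x)⁻¹ a b * ∑ l, christoffel g l k b x * Λ x l)
          - (∑ l, (g x)⁻¹ a l * christoffel g b k l x * Λ x b)
          - (∑ m, christoffel g a k m x * (g x)⁻¹ m b) * Λ x b) := by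
        refine Finset.sum_congr rfl fun b _ => ?_
        rw [pd_ginv hg hgs hgn k a b x, pdΛ b, sub_mul, neg_mul, Finset.sum_mul]
        ring
    _ = (∑ b, (g x)⁻¹ a b * ∑ l, christoffel g l k b x * Λ x l)
        - (∑ b, ∑ l, (g x)⁻¹ a l * christoffel g b k l x * Λ x b)
        - ∑ b, (∑ m, christoffel g a k m x * (g x)⁻¹ m b) * Λ x b := by
        rw [Finset.sum_sub_distrib, Finset.sum_sub_distrib]
    _ = -∑ m, christoffel g a k m x * (∑ b, (g x)⁻¹ m b * Λ x b) := by
        have hA : (∑ b, (g x)⁻¹ a b * ∑ l, christoffel g l k b x * Λ x l)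
            = ∑ b, ∑ l, (g x)⁻¹ a l * christoffel g b k l x * Λ x b := by
          calc (∑ b, (g x)⁻¹ a b * ∑ l, christoffel g l k b x * Λ x l)
              = ∑ b, ∑ l, (g x)⁻¹ a b * (christoffel g l k b x * Λ x l) := by
                exact Finset.sum_congr rfl fun b _ => Finset.mul_sum _ _ _
            _ = ∑ l, ∑ b, (g x)⁻¹ a b * (christoffel g l k b x * Λ x l) := Finset.sum_comm
            _ = ∑ b, ∑ l, (g x)⁻¹ a l * christoffel g b k l x * Λ x b := by
                exact Finset.sum_congr rfl fun b _ => Finset.sum_congr rfl fun l _ => by ring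
        have hB : (∑ b, (∑ m, christoffel g a k m x * (g x)⁻¹ m b) * Λ x b)
            = ∑ m, christoffel g a k m x * (∑ b, (g x)⁻¹ m b * Λ x b) := by
          calc (∑ b, (∑ m, christoffel g a k m x * (g x)⁻¹ m b) * Λ x b)
              = ∑ b, ∑ m, christoffel g a k m x * (g x)⁻¹ m b * Λ x b := by
                exact Finset.sum_congr rfl fun b _ => Finset.sum_mul _ _ _
            _ = ∑ m, ∑ b, christoffel g a k m x * (g x)⁻¹ m b * Λ x b := Finset.sum_comm
            _ = ∑ m, christoffel g a k m x * (∑ b, (g x)⁻¹ m b * Λ x b) := by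
                refine Finset.sum_congr rfl fun m _ => ?_
                rw [Finset.mul_sum]
                exact Finset.sum_congr rfl fun b _ => by ring
        rw [hA, hB]
        ring
end Geom3



/-- if `(L, Λ, 0)` solves the extended system with `B = 0` and `μ = 0`
(so `∇Λ = 0`), and `dλ = Λ`, then the 1-form `Λ̃ = L(Λ^♯,·) − λΛ` satisfies
`∇Λ̃ = μ̃ g` with `μ̃ = |Λ|² = g(Λ^♯,Λ^♯)` constant. -/
theorem statement_2 {ι : Type} [Fintype ι] [DecidableEq ι]
    (g L : (ι → ℝ) → Matrix ι ι ℝ) (Λ : (ι → ℝ) → ι → ℝ) (lam : (ι → ℝ) → ℝ)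
    (hg : SmoothM g) (hgs : SymM g) (hgn : NondegM g)
    (hL : SmoothM L) (hLs : SymM L)
    (hΛ : ∀ i, ContDiff ℝ (⊤ : ℕ∞) fun x => Λ x i)
    (hlam : ContDiff ℝ (⊤ : ℕ∞) lam)
    (hproj : ProjEqn g L Λ)
    (hpar : ∀ k i x, covDer1 g Λ k i x = 0)
    (hdlam : ∀ i x, pd i lam x = Λ x i) :
    (∀ k i x,
        covDer1 g
          (fun y i => (∑ a, ∑ b, L y i a * (g y)⁻¹ a b * Λ y b) - lam y * Λ y i) k i x
          = (∑ a, ∑ b, (g x)⁻¹ a b * Λ x a * Λ x b) * g x k i) ∧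
    (∀ x y, (∑ a, ∑ b, (g x)⁻¹ a b * Λ x a * Λ x b)
        = ∑ a, ∑ b, (g y)⁻¹ a b * Λ y a * Λ y b) := by
    -- notation
  set Xi : (ι → ℝ) → ι → ℝ := fun y a => ∑ b, (g y)⁻¹ a b * Λ y b with hXi
  -- differentiability
  have dΛ : ∀ b x, DifferentiableAt ℝ (fun y => Λ y b) x :=
    fun b x => ((hΛ b).differentiable (by simp)).differentiableAt
  have dinv : ∀ i j x, DifferentiableAt ℝ (fun y => (g y)⁻¹ i j) x :=
    fun i j x => ((smooth_ginv hg hgn i j).differentiable (by simp)).differentiableAt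
  have dL : ∀ i j x, DifferentiableAt ℝ (fun y => L y i j) x :=
    fun i j x => ((hL i j).differentiable (by simp)).differentiableAt
  have dlam : ∀ x, DifferentiableAt ℝ lam x := fun x => (hlam.differentiable (by simp)).differentiableAt
  have dXi : ∀ a x, DifferentiableAt ℝ (fun y => Xi y a) x := by
    intro a x
    exact DifferentiableAt.fun_sum fun b _ => (dinv a b x).mul (dΛ b x)
  -- basic derivative identities
  have pdΛ : ∀ k b x, pd k (fun y => Λ y b) x = ∑ l, christoffel g l k b x * Λ x l := by
    intro k b x
    have := hpar k b x
    rw [covDer1] at this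
    linarith
  have pdXi : ∀ k a x, pd k (fun y => Xi y a) x = -∑ m, christoffel g a k m x * Xi x m :=
    fun k a x => pd_xi hg hgs hgn hΛ hpar k a x
  have pdL : ∀ k i a x, pd k (fun y => L y i a) x
      = g x k i * Λ x a + g x k a * Λ x i + (∑ l, christoffel g l k i x * L x l a)
        + ∑ l, christoffel g l k a x * L x i l := by
    intro k i a x
    have := hproj k i a x
    rw [covDer2] at this
    linarith
  -- lowering the index of Xi gives back Λ
  have hlow : ∀ k x, ∑ a, g x k a * Xi x a = Λ x k := by
    intro k x
    calc ∑ a, g x k a * Xi x a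
        = ∑ a, ∑ b, g x k a * (g x)⁻¹ a b * Λ x b := by
          refine Finset.sum_congr rfl fun a _ => ?_
          rw [hXi, Finset.mul_sum]
          exact Finset.sum_congr rfl fun b _ => by ring
      _ = ∑ b, (∑ a, g x k a * (g x)⁻¹ a b) * Λ x b := by
          rw [Finset.sum_comm]
          exact Finset.sum_congr rfl fun b _ => (Finset.sum_mul _ _ _).symm
      _ = ∑ b, (if k = b then 1 else 0) * Λ x b := by
          exact Finset.sum_congr rfl fun b _ => by rw [hinv₂ hgn]
      _ = Λ x k := by simp
  -- the tilde 1-form, rewritten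
  have hform : ∀ (y : ι → ℝ) (i : ι),
      (∑ a, ∑ b, L y i a * (g y)⁻¹ a b * Λ y b) - lam y * Λ y i
        = (∑ a, L y i a * Xi y a) - lam y * Λ y i := by
    intro y i
    congr 1
    refine Finset.sum_congr rfl fun a _ => ?_
    rw [hXi, Finset.mul_sum]
    exact Finset.sum_congr rfl fun b _ => by ring
  -- mu tilde, rewritten
  have hmu : ∀ x : ι → ℝ, (∑ a, ∑ b, (g x)⁻¹ a b * Λ x a * Λ x b) = ∑ a, Λ x a * Xi x a := by
    intro x
    refine Finset.sum_congr rfl fun a _ => ?_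
    rw [hXi, Finset.mul_sum]
    exact Finset.sum_congr rfl fun b _ => by ring
  constructor
  · -- main covariant derivative computation
    intro k i x
    rw [covDer1]
    have e0 : pd k (fun y => (∑ a, ∑ b, L y i a * (g y)⁻¹ a b * Λ y b) - lam y * Λ y i) x
        = pd k (fun y => (∑ a, L y i a * Xi y a) - lam y * Λ y i) x :=
      pd_congr (fun y => hform y i) k x
    rw [e0]
    have e1 : pd k (fun y => (∑ a, L y i a * Xi y a) - lam y * Λ y i) x
        = (∑ a, (pd k (fun y => L y i a) x * Xi x a + L x i a * pd k (fun y => Xi y a) x))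
          - (pd k lam x * Λ x i + lam x * pd k (fun y => Λ y i) x) := by
      rw [pd_sub (DifferentiableAt.fun_sum fun a _ => (dL i a x).fun_mul (dXi a x))
        ((dlam x).fun_mul (dΛ i x)),
        pd_sum (fun a _ => (dL i a x).fun_mul (dXi a x)),
        pd_mul (dlam x) (dΛ i x)]
      congr 1
      exact Finset.sum_congr rfl fun a _ => pd_mul (dL i a x) (dXi a x)
    rw [e1]
    have e2 : ∑ a, (pd k (fun y => L y i a) x * Xi x a + L x i a * pd k (fun y => Xi y a) x)
        = (∑ a, g x k i * Λ x a * Xi x a) + (∑ a, g x k a * Λ x i * Xi x a)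
          + (∑ a, (∑ l, christoffel g l k i x * L x l a) * Xi x a)
          + (∑ a, (∑ l, christoffel g l k a x * L x i l) * Xi x a)
          - ∑ a, L x i a * ∑ m, christoffel g a k m x * Xi x m := by
      rw [← Finset.sum_add_distrib, ← Finset.sum_add_distrib, ← Finset.sum_add_distrib,
        ← Finset.sum_sub_distrib]
      refine Finset.sum_congr rfl fun a _ => ?_
      rw [pdL k i a x, pdXi k a x]
      ring
    rw [e2, pdΛ k i x, hdlam k x]
    -- cancellation of the two Christoffel-L cross terms
    have e3 : (∑ a, (∑ l, christoffel g l k a x * L x i l) * Xi x a)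
        = ∑ a, L x i a * ∑ m, christoffel g a k m x * Xi x m := by
      calc (∑ a, (∑ l, christoffel g l k a x * L x i l) * Xi x a)
          = ∑ a, ∑ l, christoffel g l k a x * L x i l * Xi x a := by
            exact Finset.sum_congr rfl fun a _ => Finset.sum_mul _ _ _
        _ = ∑ l, ∑ a, christoffel g l k a x * L x i l * Xi x a := Finset.sum_comm
        _ = ∑ a, L x i a * ∑ m, christoffel g a k m x * Xi x m := by
            refine Finset.sum_congr rfl fun a _ => ?_
            rw [Finset.mul_sum]
            exact Finset.sum_congr rfl fun m _ => by ring
    have e4 : (∑ a, g x k i * Λ x a * Xi x a) = g x k i * ∑ a, Λ x a * Xi x a := by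
      rw [Finset.mul_sum]
      exact Finset.sum_congr rfl fun a _ => by ring
    have e5 : (∑ a, g x k a * Λ x i * Xi x a) = Λ x i * Λ x k := by
      calc (∑ a, g x k a * Λ x i * Xi x a)
          = Λ x i * ∑ a, g x k a * Xi x a := by
            rw [Finset.mul_sum]
            exact Finset.sum_congr rfl fun a _ => by ring
        _ = Λ x i * Λ x k := by rw [hlow k x]
    have e6 : (∑ a, (∑ l, christoffel g l k i x * L x l a) * Xi x a)
        = ∑ l, christoffel g l k i x * (∑ a, L x l a * Xi x a) := by
      calc (∑ a, (∑ l, christoffel g l k i x * L x l a) * Xi x a)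
          = ∑ a, ∑ l, christoffel g l k i x * L x l a * Xi x a := by
            exact Finset.sum_congr rfl fun a _ => Finset.sum_mul _ _ _
        _ = ∑ l, ∑ a, christoffel g l k i x * L x l a * Xi x a := Finset.sum_comm
        _ = ∑ l, christoffel g l k i x * (∑ a, L x l a * Xi x a) := by
            refine Finset.sum_congr rfl fun l _ => ?_
            rw [Finset.mul_sum]
            exact Finset.sum_congr rfl fun a _ => by ring
    rw [e3, e4, e5, e6, hmu x]
    have e7 : ∑ l, christoffel g l k i x *
        ((∑ a, ∑ b, L x l a * (g x)⁻¹ a b * Λ x b) - lam x * Λ x l)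
        = (∑ l, christoffel g l k i x * (∑ a, L x l a * Xi x a))
          - lam x * ∑ l, christoffel g l k i x * Λ x l := by
      calc ∑ l, christoffel g l k i x *
          ((∑ a, ∑ b, L x l a * (g x)⁻¹ a b * Λ x b) - lam x * Λ x l)
          = ∑ l, (christoffel g l k i x * (∑ a, L x l a * Xi x a)
              - lam x * (christoffel g l k i x * Λ x l)) := by
            refine Finset.sum_congr rfl fun l _ => ?_
            rw [hform x l]; ring
        _ = _ := by rw [Finset.sum_sub_distrib, ← Finset.mul_sum]
    rw [e7]
    ring
  · -- constancy of mu tilde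
    have hpdmu : ∀ k x, pd k (fun y => ∑ a, ∑ b, (g y)⁻¹ a b * Λ y a * Λ y b) x = 0 := by
      intro k x
      have e0 : pd k (fun y => ∑ a, ∑ b, (g y)⁻¹ a b * Λ y a * Λ y b) x
          = pd k (fun y => ∑ a, Λ y a * Xi y a) x := pd_congr (fun y => hmu y) k x
      rw [e0, pd_sum (fun a _ => (dΛ a x).fun_mul (dXi a x))]
      have e1 : ∀ a ∈ Finset.univ, pd k (fun y => Λ y a * Xi y a) x
          = (∑ l, christoffel g l k a x * Λ x l) * Xi x a
            - Λ x a * ∑ m, christoffel g a k m x * Xi x m := by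
        intro a _
        rw [pd_mul (dΛ a x) (dXi a x), pdΛ k a x, pdXi k a x]
        ring
      rw [Finset.sum_congr rfl e1, Finset.sum_sub_distrib]
      have e2 : (∑ a, (∑ l, christoffel g l k a x * Λ x l) * Xi x a)
          = ∑ a, Λ x a * ∑ m, christoffel g a k m x * Xi x m := by
        calc (∑ a, (∑ l, christoffel g l k a x * Λ x l) * Xi x a)
            = ∑ a, ∑ l, christoffel g l k a x * Λ x l * Xi x a := by
              exact Finset.sum_congr rfl fun a _ => Finset.sum_mul _ _ _
          _ = ∑ l, ∑ a, christoffel g l k a x * Λ x l * Xi x a := Finset.sum_comm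
          _ = ∑ a, Λ x a * ∑ m, christoffel g a k m x * Xi x m := by
              refine Finset.sum_congr rfl fun a _ => ?_
              rw [Finset.mul_sum]
              exact Finset.sum_congr rfl fun m _ => by ring
      rw [e2, sub_self]
    have hdiff : Differentiable ℝ (fun y => ∑ a, ∑ b, (g y)⁻¹ a b * Λ y a * Λ y b) := by
      refine Differentiable.fun_sum fun a _ => Differentiable.fun_sum fun b _ => ?_
      exact (((smooth_ginv hg hgn a b).differentiable (by simp)).mul
        ((hΛ a).differentiable (by simp))).mul ((hΛ b).differentiable (by simp))
    have hz : ∀ x, fderiv ℝ (fun y => ∑ a, ∑ b, (g y)⁻¹ a b * Λ y a * Λ y b) x = 0 := by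
      intro x
      refine ContinuousLinearMap.ext fun v => ?_
      have hv : (∑ i, v i • (Pi.single i (1:ℝ) : ι → ℝ)) = v := by
        funext j
        simp [Finset.sum_apply, Pi.single_apply]
      calc fderiv ℝ (fun y => ∑ a, ∑ b, (g y)⁻¹ a b * Λ y a * Λ y b) x v
          = fderiv ℝ (fun y => ∑ a, ∑ b, (g y)⁻¹ a b * Λ y a * Λ y b) x
              (∑ i, v i • (Pi.single i (1:ℝ) : ι → ℝ)) := by rw [hv]
        _ = ∑ i, v i • fderiv ℝ (fun y => ∑ a, ∑ b, (g y)⁻¹ a b * Λ y a * Λ y b) x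
              (Pi.single i (1:ℝ)) := by
            rw [map_sum]
            exact Finset.sum_congr rfl fun i _ => ContinuousLinearMap.map_smul _ _ _
        _ = 0 := by
            refine Finset.sum_eq_zero fun i _ => ?_
            have := hpdmu i x
            rw [pd] at this
            rw [this, smul_zero]
    exact fun x y => is_const_of_fderiv_eq_zero hdiff hz x y
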